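/- Let c^H_{ijkl} and ϵ^H_{ij} be the HMM effective elastic and dielectric tensors obtained from the two HMM cell problems on the cube I_δ(x_α). Then c^H is uniformly elliptic and ϵ^H is positive definite: there exist α_H > 0 and β_H > 0 such that c^H_{ijkl} X_{ij} X_{kl} ≥ α_H X_{ij} X_{ij} for every symmetric matrix X, and ϵ^H_{ij} X_i X_j ≥ β_H X_i X_i for every vector X. -/

import Mathlib

open MeasureTheory Filter

noncomputable section

/-- Partial derivative of `f` in the `j`-th coordinate direction. -/
def pd (f : (Fin 3 → ℝ) → ℝ) (j : Fin 3) (x : Fin 3 → ℝ) : ℝ :=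
  fderiv ℝ f x (Pi.single j 1)

/-- The cube `I_δ(c) = c + [-δ/2, δ/2]^3`. -/
def cube (c : Fin 3 → ℝ) (δ : ℝ) : Set (Fin 3 → ℝ) :=
  Set.univ.pi fun i => Set.Icc (c i - δ / 2) (c i + δ / 2)

/-- A model for membership in `H¹₀(s)`: differentiable, vanishing on the boundary
of `s`, with the function and its gradient square integrable on `s`. -/
def H10 (s : Set (Fin 3 → ℝ)) (f : (Fin 3 → ℝ) → ℝ) : Prop :=
  Differentiable ℝ f ∧ (∀ x ∈ frontier s, f x = 0) ∧
    IntegrableOn (fun x => f x ^ 2) s ∧ ∀ j, IntegrableOn (fun x => pd f j x ^ 2) s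

/-- Bounded measurable (i.e. `L^∞`) scalar function. -/
def BddMeas (f : (Fin 3 → ℝ) → ℝ) : Prop :=
  Measurable f ∧ ∃ M, ∀ x, |f x| ≤ M

/-- The HMM effective elastic coefficient
`c^H_{ijkl} = ⟨ c_{ijnh} ∂_h P^{kl}_n + e_{hij} ∂_h Φ_{kl} ⟩_{I_δ}`. -/
def cH (c : Fin 3 → Fin 3 → Fin 3 → Fin 3 → (Fin 3 → ℝ) → ℝ)
    (e : Fin 3 → Fin 3 → Fin 3 → (Fin 3 → ℝ) → ℝ) (s : Set (Fin 3 → ℝ))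
    (P : Fin 3 → Fin 3 → Fin 3 → (Fin 3 → ℝ) → ℝ)
    (Φ : Fin 3 → Fin 3 → (Fin 3 → ℝ) → ℝ) (i j k l : Fin 3) : ℝ :=
  ⨍ x in s, ((∑ n, ∑ h, c i j n h x * pd (P k l n) h x) + ∑ h, e h i j x * pd (Φ k l) h x)

/-- The HMM effective piezoelectric coefficient
`e^H_{ikl} = ⟨ e_{inh} ∂_h P^{kl}_n − ϵ_{ih} ∂_h Φ_{kl} ⟩_{I_δ}`. -/
def eH (e : Fin 3 → Fin 3 → Fin 3 → (Fin 3 → ℝ) → ℝ)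
    (ϵ : Fin 3 → Fin 3 → (Fin 3 → ℝ) → ℝ) (s : Set (Fin 3 → ℝ))
    (P : Fin 3 → Fin 3 → Fin 3 → (Fin 3 → ℝ) → ℝ)
    (Φ : Fin 3 → Fin 3 → (Fin 3 → ℝ) → ℝ) (i k l : Fin 3) : ℝ :=
  ⨍ x in s, ((∑ n, ∑ h, e i n h x * pd (P k l n) h x) - ∑ h, ϵ i h x * pd (Φ k l) h x)

/-- The HMM effective dielectric coefficient
`ϵ^H_{il} = −⟨ e_{inh} ∂_h Q^{l}_n − ϵ_{ih} ∂_h Ψ_l ⟩_{I_δ}`. -/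
def epsH (e : Fin 3 → Fin 3 → Fin 3 → (Fin 3 → ℝ) → ℝ)
    (ϵ : Fin 3 → Fin 3 → (Fin 3 → ℝ) → ℝ) (s : Set (Fin 3 → ℝ))
    (Q : Fin 3 → Fin 3 → (Fin 3 → ℝ) → ℝ)
    (Ψ : Fin 3 → (Fin 3 → ℝ) → ℝ) (i l : Fin 3) : ℝ :=
  -⨍ x in s, ((∑ n, ∑ h, e i n h x * pd (Q l n) h x) - ∑ h, ϵ i h x * pd (Ψ l) h x)


/-!
Fix a symmetric `X` and put `U = ∑ X_kl P^{kl}`, `φ = ∑ X_kl Φ_kl`. By linearity `(U, φ)` solves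
the cell system with boundary data `(X x, 0)`, and `∑ c^H_ijkl X_ij X_kl = ∑ X_ij ⨍ σ_ij(U, φ)`.
Testing the two weak equations with `U - X x` and `φ` turns this into `⨍ (σ : ∇U - D · ∇φ)`, in
which the piezoelectric terms cancel, leaving `⨍ (c ∇U : ∇U + ϵ ∇φ · ∇φ) ≥ α ⨍ |sym ∇U|²`.
As `U - X x` vanishes on the boundary, `⨍ ∇U = X`, and Jensen's inequality gives
`⨍ |sym ∇U|² ≥ |X|²`. The dielectric tensor is treated in the same way with
`(∑ v_l Q^l, ∑ v_l Ψ_l)`, whose boundary data is `(0, v · x)`.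
-/

local notation "ℝ³" => Fin 3 → ℝ

namespace MeasureTheory

variable {Ω : Type*} [MeasurableSpace Ω] {μ : Measure Ω}

theorem average_add {f g : Ω → ℝ} (hf : Integrable f μ) (hg : Integrable g μ) :
    ⨍ x, f x + g x ∂μ = ⨍ x, f x ∂μ + ⨍ x, g x ∂μ := by
  simp only [average_eq, integral_add hf hg, smul_add]

theorem average_sub {f g : Ω → ℝ} (hf : Integrable f μ) (hg : Integrable g μ) :
    ⨍ x, f x - g x ∂μ = ⨍ x, f x ∂μ - ⨍ x, g x ∂μ := by
  simp only [average_eq, integral_sub hf hg, smul_sub]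

theorem average_finsetSum {ι : Type*} (t : Finset ι) {f : ι → Ω → ℝ}
    (hf : ∀ i ∈ t, Integrable (f i) μ) :
    ⨍ x, ∑ i ∈ t, f i x ∂μ = ∑ i ∈ t, ⨍ x, f i x ∂μ := by
  simp only [average_eq, integral_finsetSum t hf, Finset.smul_sum]

theorem average_const_mul (r : ℝ) (f : Ω → ℝ) : ⨍ x, r * f x ∂μ = r * ⨍ x, f x ∂μ := by
  simp only [average_eq, integral_const_mul, smul_eq_mul, mul_left_comm]

theorem average_mul_const (f : Ω → ℝ) (r : ℝ) : ⨍ x, f x * r ∂μ = (⨍ x, f x ∂μ) * r := by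
  simp only [mul_comm _ r, average_const_mul]

theorem average_div_const (f : Ω → ℝ) (r : ℝ) : ⨍ x, f x / r ∂μ = (⨍ x, f x ∂μ) / r := by
  simp only [div_eq_mul_inv, average_mul_const]

theorem average_mono {f g : Ω → ℝ} (hf : Integrable f μ) (hg : Integrable g μ)
    (hfg : f ≤ᵐ[μ] g) : ⨍ x, f x ∂μ ≤ ⨍ x, g x ∂μ := by
  simp only [average_eq, smul_eq_mul]
  exact mul_le_mul_of_nonneg_left (integral_mono_ae hf hg hfg) (inv_nonneg.2 measureReal_nonneg)

theorem sq_average_le_average_sq [IsFiniteMeasure μ] [NeZero μ] {f : Ω → ℝ}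
    (hf : MemLp f 2 μ) : (⨍ x, f x ∂μ) ^ 2 ≤ ⨍ x, f x ^ 2 ∂μ :=
  (even_two.convexOn_pow (𝕜 := ℝ)).map_average_le (continuous_pow 2).continuousOn isClosed_univ
    (by simp) (hf.integrable one_le_two) hf.integrable_sq

end MeasureTheory

section Algebra

variable {ι : Type*} [Fintype ι]

theorem sum_mul_eq_sum_mul_symmetrize {a : ι → ι → ℝ} (ha : ∀ i j, a i j = a j i)
    (G : ι → ι → ℝ) :
    ∑ i, ∑ j, a i j * G i j = ∑ i, ∑ j, a i j * ((G i j + G j i) / 2) := by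
  have htranspose : ∑ i, ∑ j, a i j * G j i = ∑ i, ∑ j, a i j * G i j := by
    rw [Finset.sum_comm]
    simp only [ha]
  simp only [mul_div_assoc', mul_add, ← Finset.sum_div, Finset.sum_add_distrib, htranspose]
  ring

theorem elastic_energy_ge {c : ι → ι → ι → ι → ℝ} {α : ℝ}
    (hminor : ∀ i j k l, c i j k l = c j i k l) (hmajor : ∀ i j k l, c i j k l = c k l i j)
    (hell : ∀ X : ι → ι → ℝ, (∀ i j, X i j = X j i) →
      α * ∑ i, ∑ j, X i j ^ 2 ≤ ∑ i, ∑ j, ∑ k, ∑ l, c i j k l * X i j * X k l)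
    (G : ι → ι → ℝ) :
    α * ∑ i, ∑ j, ((G i j + G j i) / 2) ^ 2 ≤
      ∑ i, ∑ j, (∑ n, ∑ h, c i j n h * G n h) * G i j := by
  set S : ι → ι → ℝ := fun i j => (G i j + G j i) / 2
  have hS : ∀ i j, S i j = S j i := fun i j => by simp only [S]; ring
  have hstress : ∀ i j, ∑ n, ∑ h, c i j n h * G n h = ∑ n, ∑ h, c i j n h * S n h := by
    intro i j
    simp only [hmajor i j]
    exact sum_mul_eq_sum_mul_symmetrize (fun n h => hminor n h i j) G
  calc α * ∑ i, ∑ j, S i j ^ 2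
      ≤ ∑ i, ∑ j, ∑ k, ∑ l, c i j k l * S i j * S k l := hell S hS
    _ = ∑ i, ∑ j, (∑ n, ∑ h, c i j n h * S n h) * S i j := by
      simp only [Finset.sum_mul, mul_right_comm]
    _ = ∑ i, ∑ j, (∑ n, ∑ h, c i j n h * G n h) * G i j := by
      simp only [← hstress]
      refine (sum_mul_eq_sum_mul_symmetrize (fun i j => ?_) G).symm
      simp only [hminor i j]

theorem piezo_energy_identity (c : ι → ι → ι → ι → ℝ) (e : ι → ι → ι → ℝ) (ϵ : ι → ι → ℝ)
    (G : ι → ι → ℝ) (F : ι → ℝ) :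
    ∑ i, ∑ j, ((∑ n, ∑ h, c i j n h * G n h) + ∑ h, e h i j * F h) * G i j
        - ∑ i, ((∑ n, ∑ h, e i n h * G n h) - ∑ h, ϵ i h * F h) * F i =
      ∑ i, ∑ j, (∑ n, ∑ h, c i j n h * G n h) * G i j + ∑ i, (∑ h, ϵ i h * F h) * F i := by
  have hcoupling : ∑ i, ∑ j, (∑ h, e h i j * F h) * G i j =
      ∑ i, (∑ n, ∑ h, e i n h * G n h) * F i := by
    simp only [Finset.sum_mul]
    conv_lhs => enter [2, i]; rw [Finset.sum_comm]
    rw [Finset.sum_comm]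
    simp only [mul_right_comm]
  simp only [add_mul, sub_mul, Finset.sum_add_distrib, Finset.sum_sub_distrib, hcoupling]
  ring

end Algebra

section PartialDerivative

theorem measurable_pd (f : ℝ³ → ℝ) (j : Fin 3) : Measurable (pd f j) :=
  measurable_fderiv_apply_const ℝ f _

theorem pd_sum_const_mul {κ : Type*} [Fintype κ] (a : κ → ℝ) {f : κ → ℝ³ → ℝ}
    (hf : ∀ k, Differentiable ℝ (f k)) (j : Fin 3) (x : ℝ³) :
    pd (fun y => ∑ k, a k * f k y) j x = ∑ k, a k * pd (f k) j x := by
  have hmul k := fderiv_const_mul (hf k x) (a k)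
  simp [pd, fderiv_fun_sum fun k _ => ((hf k).const_mul (a k)) x, hmul]

theorem pd_sub {f g : ℝ³ → ℝ} (hf : Differentiable ℝ f) (hg : Differentiable ℝ g)
    (j : Fin 3) (x : ℝ³) : pd (fun y => f y - g y) j x = pd f j x - pd g j x := by
  simp [pd, fderiv_fun_sub (hf x) (hg x)]

theorem differentiable_linear (a : Fin 3 → ℝ) :
    Differentiable ℝ fun y : ℝ³ => ∑ h, a h * y h := by
  fun_prop

theorem pd_linear (a : Fin 3 → ℝ) (j : Fin 3) (x : ℝ³) :
    pd (fun y => ∑ h, a h * y h) j x = a j := by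
  rw [pd_sum_const_mul a fun h => differentiable_apply h]
  simp [pd, fun h => (hasFDerivAt_apply (𝕜 := ℝ) h x).fderiv, Pi.single_apply]

end PartialDerivative

section H10

variable {s : Set ℝ³} {f : ℝ³ → ℝ}

theorem H10.memLp (hf : H10 s f) : MemLp f 2 (volume.restrict s) :=
  (memLp_two_iff_integrable_sq hf.1.continuous.aestronglyMeasurable).2 hf.2.2.1

theorem H10.memLp_pd (hf : H10 s f) (j : Fin 3) : MemLp (pd f j) 2 (volume.restrict s) :=
  (memLp_two_iff_integrable_sq (measurable_pd f j).aestronglyMeasurable).2 (hf.2.2.2 j)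

theorem H10.sum_const_mul {κ : Type*} [Fintype κ] (a : κ → ℝ) {f : κ → ℝ³ → ℝ}
    (hf : ∀ k, H10 s (f k)) : H10 s fun x => ∑ k, a k * f k x := by
  refine ⟨Differentiable.fun_sum fun k _ => (hf k).1.const_mul (a k),
    fun x hx => by simp [(hf _).2.1 x hx], ?_, fun j => ?_⟩
  · exact (memLp_finsetSum _ fun k _ => (hf k).memLp.const_mul (a k)).integrable_sq
  · simp only [pd_sum_const_mul a fun k => (hf k).1]
    exact (memLp_finsetSum _ fun k _ => ((hf k).memLp_pd j).const_mul (a k)).integrable_sq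

end H10

section Box

open Set

theorem mem_frontier_Icc_of_apply_eq {ι : Type*} [Finite ι] {a b p : ι → ℝ} (hp : p ∈ Icc a b)
    {i : ι} (hi : p i = a i ∨ p i = b i) : p ∈ frontier (Icc a b) := by
  refine ⟨subset_closure hp, fun hint => ?_⟩
  rw [← pi_univ_Icc, interior_pi_set finite_univ] at hint
  have := hint i (mem_univ i)
  simp only [interior_Icc, mem_Ioo] at this
  rcases hi with hi | hi <;> rw [hi] at this
  exacts [lt_irrefl _ this.1, lt_irrefl _ this.2]

theorem integral_pd_eq_zero_of_H10_Icc {a b : ℝ³} (hab : a ≤ b) {w : ℝ³ → ℝ}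
    (hw : H10 (Icc a b) w) (j : Fin 3) : ∫ x in Icc a b, pd w j x = 0 := by
  set F : Fin 3 → ℝ³ → ℝ := Pi.single j w
  set F' : Fin 3 → ℝ³ → ℝ³ →L[ℝ] ℝ := Pi.single j (fderiv ℝ w)
  have hdiv x : ∑ i, F' i x (Pi.single i 1) = pd w j x := by
    rw [Finset.sum_eq_single j (fun i _ hij => by simp [F', hij]) (by simp)]
    simp [F', pd]
  have hcont i : ContinuousOn (F i) (Icc a b) := by
    rcases eq_or_ne i j with rfl | hij
    · simpa [F] using hw.1.continuous.continuousOn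
    · rw [show F i = 0 from Pi.single_eq_of_ne hij _]
      exact continuousOn_const
  have hderiv x i : HasFDerivAt (F i) (F' i x) x := by
    rcases eq_or_ne i j with rfl | hij
    · simpa [F, F'] using (hw.1 x).hasFDerivAt
    · rw [show F i = 0 from Pi.single_eq_of_ne hij _, show F' i = 0 from Pi.single_eq_of_ne hij _]
      exact hasFDerivAt_const 0 x
  have hint : IntegrableOn (fun x => ∑ i, F' i x (Pi.single i 1)) (Icc a b) := by
    have : IsFiniteMeasure (volume.restrict (Icc a b)) :=
      isFiniteMeasure_restrict.2 isCompact_Icc.measure_lt_top.ne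
    simp only [hdiv]
    exact (hw.memLp_pd j).integrable one_le_two
  have hface i : ∀ t ∈ ({a i, b i} : Set ℝ), ∀ y ∈ Icc (a ∘ i.succAbove) (b ∘ i.succAbove),
      F i (i.insertNth t y) = 0 := by
    intro t ht y hy
    rcases eq_or_ne i j with rfl | hij
    · simp only [F, Pi.single_eq_same]
      refine hw.2.1 _ (mem_frontier_Icc_of_apply_eq (i := i) ?_ (by simpa using ht))
      refine Fin.insertNth_mem_Icc.2 ⟨?_, hy⟩
      rcases ht with rfl | rfl
      exacts [⟨le_rfl, hab i⟩, ⟨hab i, le_rfl⟩]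
    · simp [F, hij]
  rw [← integral_congr_ae (ae_of_all _ hdiv), integral_divergence_of_hasFDerivAt_off_countable'
    a b hab F F' ∅ countable_empty hcont (fun x _ => hderiv x) hint]
  refine Finset.sum_eq_zero fun i _ => ?_
  rw [setIntegral_eq_zero_of_forall_eq_zero (hface i (b i) (by simp)),
    setIntegral_eq_zero_of_forall_eq_zero (hface i (a i) (by simp)), sub_zero]

theorem cube_eq_Icc (c : ℝ³) (δ : ℝ) :
    cube c δ = Icc (fun i => c i - δ / 2) (fun i => c i + δ / 2) := by
  rw [cube, pi_univ_Icc]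

instance (c : ℝ³) (δ : ℝ) : IsFiniteMeasure (volume.restrict (cube c δ)) :=
  isFiniteMeasure_restrict.2 (cube_eq_Icc c δ ▸ isCompact_Icc.measure_lt_top.ne)

theorem neZero_volume_restrict_cube (c : ℝ³) {δ : ℝ} (hδ : 0 < δ) :
    NeZero (volume.restrict (cube c δ)) :=
  ⟨by simp [Measure.restrict_eq_zero, cube_eq_Icc, Real.volume_Icc_pi, hδ]⟩

theorem integral_pd_eq_zero_of_H10_cube (c : ℝ³) {δ : ℝ} (hδ : 0 ≤ δ) {w : ℝ³ → ℝ}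
    (hw : H10 (cube c δ) w) (j : Fin 3) : ∫ x in cube c δ, pd w j x = 0 := by
  rw [cube_eq_Icc] at hw ⊢
  exact integral_pd_eq_zero_of_H10_Icc (fun i => by dsimp only; linarith) hw j

end Box

theorem BddMeas.memLp_mul {b f : ℝ³ → ℝ} {μ : Measure ℝ³} {p : ENNReal} (hb : BddMeas b)
    (hf : MemLp f p μ) : MemLp (fun x => b x * f x) p μ := by
  obtain ⟨hbm, M, hM⟩ := hb
  refine hf.of_le_mul (c := M) (hbm.aestronglyMeasurable.mul hf.1) (ae_of_all _ fun x => ?_)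
  rw [norm_mul]
  exact mul_le_mul_of_nonneg_right ((Real.norm_eq_abs _).trans_le (hM x)) (norm_nonneg _)

section CellProblem

variable (c : Fin 3 → Fin 3 → Fin 3 → Fin 3 → ℝ³ → ℝ) (e : Fin 3 → Fin 3 → Fin 3 → ℝ³ → ℝ)
  (ϵ : Fin 3 → Fin 3 → ℝ³ → ℝ)

def stress (U : Fin 3 → ℝ³ → ℝ) (φ : ℝ³ → ℝ) (i j : Fin 3) (x : ℝ³) : ℝ :=
  (∑ n, ∑ h, c i j n h x * pd (U n) h x) + ∑ h, e h i j x * pd φ h x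

def displacement (U : Fin 3 → ℝ³ → ℝ) (φ : ℝ³ → ℝ) (i : Fin 3) (x : ℝ³) : ℝ :=
  (∑ n, ∑ h, e i n h x * pd (U n) h x) - ∑ h, ϵ i h x * pd φ h x

def energyDensity (U : Fin 3 → ℝ³ → ℝ) (φ : ℝ³ → ℝ) (x : ℝ³) : ℝ :=
  ∑ i, ∑ j, stress c e U φ i j x * pd (U i) j x - ∑ i, displacement e ϵ U φ i x * pd φ i x

/-- `(U, φ)` is a weak solution on `s` of the coupled cell system with the affine Dirichlet data
`U = A x`, `φ = v · x` on `∂s`. -/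
structure IsCellSolution (s : Set ℝ³) (A : Fin 3 → Fin 3 → ℝ) (v : Fin 3 → ℝ)
    (U : Fin 3 → ℝ³ → ℝ) (φ : ℝ³ → ℝ) : Prop where
  h10_U : ∀ n, H10 s fun x => U n x - ∑ h, A n h * x h
  h10_φ : H10 s fun x => φ x - ∑ h, v h * x h
  weak_U : ∀ i g, H10 s g → ∫ x in s, ∑ j, stress c e U φ i j x * pd g j x = 0
  weak_φ : ∀ g, H10 s g → ∫ x in s, ∑ i, displacement e ϵ U φ i x * pd g i x = 0

theorem cH_eq_average_stress (s : Set ℝ³) (P : Fin 3 → Fin 3 → Fin 3 → ℝ³ → ℝ)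
    (Φ : Fin 3 → Fin 3 → ℝ³ → ℝ) (i j k l : Fin 3) :
    cH c e s P Φ i j k l = ⨍ x in s, stress c e (P k l) (Φ k l) i j x :=
  rfl

theorem epsH_eq_neg_average_displacement (s : Set ℝ³) (Q : Fin 3 → Fin 3 → ℝ³ → ℝ)
    (Ψ : Fin 3 → ℝ³ → ℝ) (i l : Fin 3) :
    epsH e ϵ s Q Ψ i l = -⨍ x in s, displacement e ϵ (Q l) (Ψ l) i x :=
  rfl

variable {c e ϵ}

theorem stress_sum_const_mul {κ : Type*} [Fintype κ] (a : κ → ℝ) {U : κ → Fin 3 → ℝ³ → ℝ}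
    {φ : κ → ℝ³ → ℝ} (hU : ∀ k n, Differentiable ℝ (U k n)) (hφ : ∀ k, Differentiable ℝ (φ k))
    (i j : Fin 3) (x : ℝ³) :
    stress c e (fun n y => ∑ k, a k * U k n y) (fun y => ∑ k, a k * φ k y) i j x =
      ∑ k, a k * stress c e (U k) (φ k) i j x := by
  simp only [stress, pd_sum_const_mul a fun k => hU k _, pd_sum_const_mul a hφ, Finset.mul_sum,
    mul_add, Finset.sum_add_distrib]
  congr 1
  · rw [Finset.sum_comm_cycle]
    simp only [mul_left_comm]
  · rw [Finset.sum_comm]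
    simp only [mul_left_comm]

theorem displacement_sum_const_mul {κ : Type*} [Fintype κ] (a : κ → ℝ)
    {U : κ → Fin 3 → ℝ³ → ℝ} {φ : κ → ℝ³ → ℝ} (hU : ∀ k n, Differentiable ℝ (U k n))
    (hφ : ∀ k, Differentiable ℝ (φ k)) (i : Fin 3) (x : ℝ³) :
    displacement e ϵ (fun n y => ∑ k, a k * U k n y) (fun y => ∑ k, a k * φ k y) i x =
      ∑ k, a k * displacement e ϵ (U k) (φ k) i x := by
  simp only [displacement, pd_sum_const_mul a fun k => hU k _, pd_sum_const_mul a hφ,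
    Finset.mul_sum, mul_sub, Finset.sum_sub_distrib]
  congr 1
  · rw [Finset.sum_comm_cycle]
    simp only [mul_left_comm]
  · rw [Finset.sum_comm]
    simp only [mul_left_comm]

theorem energyDensity_ge {x : ℝ³}
    (hcsym : ∀ i j k l, c i j k l x = c j i k l x ∧ c i j k l x = c k l i j x) {α β : ℝ}
    (hcell : ∀ X : Fin 3 → Fin 3 → ℝ, (∀ i j, X i j = X j i) →
      α * (∑ i, ∑ j, X i j ^ 2) ≤ ∑ i, ∑ j, ∑ k, ∑ l, c i j k l x * X i j * X k l)
    (hϵell : ∀ v : Fin 3 → ℝ, β * (∑ i, v i ^ 2) ≤ ∑ i, ∑ j, ϵ i j x * v i * v j)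
    (U : Fin 3 → ℝ³ → ℝ) (φ : ℝ³ → ℝ) :
    α * ∑ i, ∑ j, ((pd (U i) j x + pd (U j) i x) / 2) ^ 2 + β * ∑ i, pd φ i x ^ 2 ≤
      energyDensity c e ϵ U φ x := by
  refine le_of_le_of_eq ?_ (piezo_energy_identity (fun i j k l => c i j k l x)
    (fun k i j => e k i j x) (fun i j => ϵ i j x) (fun n h => pd (U n) h x) (pd φ · x)).symm
  refine add_le_add (elastic_energy_ge (fun i j k l => (hcsym i j k l).1)
    (fun i j k l => (hcsym i j k l).2) hcell _) ((hϵell _).trans_eq ?_)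
  refine Finset.sum_congr rfl fun i _ => ?_
  rw [Finset.sum_mul]
  exact Finset.sum_congr rfl fun j _ => by ring

namespace IsCellSolution

variable {s : Set ℝ³} {A : Fin 3 → Fin 3 → ℝ} {v : Fin 3 → ℝ} {U : Fin 3 → ℝ³ → ℝ}
  {φ : ℝ³ → ℝ}

theorem differentiable_U (hsol : IsCellSolution c e ϵ s A v U φ) (n : Fin 3) :
    Differentiable ℝ (U n) := by
  simpa using (hsol.h10_U n).1.fun_add (differentiable_linear (A n))

theorem differentiable_φ (hsol : IsCellSolution c e ϵ s A v U φ) : Differentiable ℝ φ := by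
  simpa using hsol.h10_φ.1.fun_add (differentiable_linear v)

theorem pd_U (hsol : IsCellSolution c e ϵ s A v U φ) (n h : Fin 3) (x : ℝ³) :
    pd (U n) h x = pd (fun y => U n y - ∑ k, A n k * y k) h x + A n h := by
  rw [pd_sub (hsol.differentiable_U n) (differentiable_linear _), pd_linear, sub_add_cancel]

theorem pd_φ (hsol : IsCellSolution c e ϵ s A v U φ) (i : Fin 3) (x : ℝ³) :
    pd φ i x = pd (fun y => φ y - ∑ k, v k * y k) i x + v i := by
  rw [pd_sub hsol.differentiable_φ (differentiable_linear _), pd_linear, sub_add_cancel]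

variable [IsFiniteMeasure (volume.restrict s)]

theorem memLp_pd_U (hsol : IsCellSolution c e ϵ s A v U φ) (n h : Fin 3) :
    MemLp (pd (U n) h) 2 (volume.restrict s) := by
  rw [funext (hsol.pd_U n h)]
  exact ((hsol.h10_U n).memLp_pd h).add (memLp_const (A n h))

theorem memLp_pd_φ (hsol : IsCellSolution c e ϵ s A v U φ) (i : Fin 3) :
    MemLp (pd φ i) 2 (volume.restrict s) := by
  rw [funext (hsol.pd_φ i)]
  exact (hsol.h10_φ.memLp_pd i).add (memLp_const (v i))

theorem memLp_stress (hc : ∀ i j k l, BddMeas (c i j k l)) (he : ∀ k i j, BddMeas (e k i j))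
    (hsol : IsCellSolution c e ϵ s A v U φ) (i j : Fin 3) :
    MemLp (stress c e U φ i j) 2 (volume.restrict s) :=
  (memLp_finsetSum _ fun n _ => memLp_finsetSum _ fun h _ =>
    (hc i j n h).memLp_mul (hsol.memLp_pd_U n h)).add
    (memLp_finsetSum _ fun h _ => (he h i j).memLp_mul (hsol.memLp_pd_φ h))

theorem memLp_displacement (he : ∀ k i j, BddMeas (e k i j)) (hϵ : ∀ i j, BddMeas (ϵ i j))
    (hsol : IsCellSolution c e ϵ s A v U φ) (i : Fin 3) :
    MemLp (displacement e ϵ U φ i) 2 (volume.restrict s) :=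
  (memLp_finsetSum _ fun n _ => memLp_finsetSum _ fun h _ =>
    (he i n h).memLp_mul (hsol.memLp_pd_U n h)).sub
    (memLp_finsetSum _ fun h _ => (hϵ i h).memLp_mul (hsol.memLp_pd_φ h))

theorem integrable_stress_mul_pd (hc : ∀ i j k l, BddMeas (c i j k l))
    (he : ∀ k i j, BddMeas (e k i j)) (hsol : IsCellSolution c e ϵ s A v U φ) (i : Fin 3)
    {g : ℝ³ → ℝ} (hg : H10 s g) :
    Integrable (fun x => ∑ j, stress c e U φ i j x * pd g j x) (volume.restrict s) :=
  integrable_finsetSum _ fun j _ => (hsol.memLp_stress hc he i j).integrable_mul (hg.memLp_pd j)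

theorem integrable_displacement_mul_pd (he : ∀ k i j, BddMeas (e k i j))
    (hϵ : ∀ i j, BddMeas (ϵ i j)) (hsol : IsCellSolution c e ϵ s A v U φ) {g : ℝ³ → ℝ}
    (hg : H10 s g) :
    Integrable (fun x => ∑ i, displacement e ϵ U φ i x * pd g i x) (volume.restrict s) :=
  integrable_finsetSum _ fun i _ =>
    (hsol.memLp_displacement he hϵ i).integrable_mul (hg.memLp_pd i)

theorem integrable_energyDensity (hc : ∀ i j k l, BddMeas (c i j k l))
    (he : ∀ k i j, BddMeas (e k i j)) (hϵ : ∀ i j, BddMeas (ϵ i j))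
    (hsol : IsCellSolution c e ϵ s A v U φ) :
    Integrable (energyDensity c e ϵ U φ) (volume.restrict s) :=
  (integrable_finsetSum _ fun i _ => integrable_finsetSum _ fun j _ =>
    (hsol.memLp_stress hc he i j).integrable_mul (hsol.memLp_pd_U i j)).sub
    (integrable_finsetSum _ fun i _ =>
      (hsol.memLp_displacement he hϵ i).integrable_mul (hsol.memLp_pd_φ i))

theorem average_energyDensity_eq (hc : ∀ i j k l, BddMeas (c i j k l))
    (he : ∀ k i j, BddMeas (e k i j)) (hϵ : ∀ i j, BddMeas (ϵ i j))
    (hsol : IsCellSolution c e ϵ s A v U φ) :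
    ⨍ x in s, energyDensity c e ϵ U φ x =
      ∑ i, ∑ j, (⨍ x in s, stress c e U φ i j x) * A i j -
        ∑ i, (⨍ x in s, displacement e ϵ U φ i x) * v i := by
  have hσ i j := (hsol.memLp_stress hc he i j).integrable one_le_two
  have hD i := (hsol.memLp_displacement he hϵ i).integrable one_le_two
  set σA : ℝ³ → ℝ := fun x => ∑ i, ∑ j, stress c e U φ i j x * A i j
  set Dv : ℝ³ → ℝ := fun x => ∑ i, displacement e ϵ U φ i x * v i
  set σw : ℝ³ → ℝ := fun x =>
    ∑ i, ∑ j, stress c e U φ i j x * pd (fun y => U i y - ∑ k, A i k * y k) j x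
  set Dψ : ℝ³ → ℝ := fun x =>
    ∑ i, displacement e ϵ U φ i x * pd (fun y => φ y - ∑ k, v k * y k) i x
  have hσA : Integrable σA (volume.restrict s) :=
    integrable_finsetSum _ fun i _ => integrable_finsetSum _ fun j _ => (hσ i j).mul_const _
  have hDv : Integrable Dv (volume.restrict s) :=
    integrable_finsetSum _ fun i _ => (hD i).mul_const _
  have hσw : Integrable σw (volume.restrict s) :=
    integrable_finsetSum _ fun i _ => hsol.integrable_stress_mul_pd hc he i (hsol.h10_U i)
  have hsplit x : energyDensity c e ϵ U φ x = σA x - Dv x + σw x - Dψ x := by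
    simp only [energyDensity, hsol.pd_U, hsol.pd_φ, mul_add, Finset.sum_add_distrib, σA, Dv, σw,
      Dψ]
    ring
  have hweak_U : ⨍ x in s, σw x = 0 := by
    rw [average_eq, integral_finsetSum _ fun i _ =>
      hsol.integrable_stress_mul_pd hc he i (hsol.h10_U i)]
    simp [hsol.weak_U _ _ (hsol.h10_U _)]
  have hweak_φ : ⨍ x in s, Dψ x = 0 := by
    rw [average_eq, hsol.weak_φ _ hsol.h10_φ, smul_zero]
  simp only [hsplit]
  rw [average_sub ?_ (hsol.integrable_displacement_mul_pd he hϵ hsol.h10_φ), average_add ?_ hσw,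
    average_sub hσA hDv, hweak_U, hweak_φ, add_zero, sub_zero]
  · simp only [σA, Dv, average_finsetSum _ fun i _ => integrable_finsetSum _
        fun j _ => (hσ i j).mul_const _, average_finsetSum _ fun i _ => (hD i).mul_const _,
      average_finsetSum _ fun j _ => (hσ _ j).mul_const _, average_mul_const]
  · exact hσA.sub hDv
  · exact (hσA.sub hDv).add hσw

theorem sum_const_mul (hc : ∀ i j k l, BddMeas (c i j k l)) (he : ∀ k i j, BddMeas (e k i j))
    (hϵ : ∀ i j, BddMeas (ϵ i j)) {κ : Type*} [Fintype κ] {A : κ → Fin 3 → Fin 3 → ℝ}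
    {v : κ → Fin 3 → ℝ} {U : κ → Fin 3 → ℝ³ → ℝ} {φ : κ → ℝ³ → ℝ}
    (hsol : ∀ k, IsCellSolution c e ϵ s (A k) (v k) (U k) (φ k)) (a : κ → ℝ) :
    IsCellSolution c e ϵ s (fun n h => ∑ k, a k * A k n h) (fun h => ∑ k, a k * v k h)
      (fun n x => ∑ k, a k * U k n x) (fun x => ∑ k, a k * φ k x) where
  h10_U n := by
    convert H10.sum_const_mul a fun k => (hsol k).h10_U n using 2 with x
    simp only [mul_sub, Finset.sum_sub_distrib, Finset.sum_mul, Finset.mul_sum]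
    rw [Finset.sum_comm (s := Finset.univ (α := Fin 3))]
    simp only [mul_assoc]
  h10_φ := by
    convert H10.sum_const_mul a fun k => (hsol k).h10_φ using 2 with x
    simp only [mul_sub, Finset.sum_sub_distrib, Finset.sum_mul, Finset.mul_sum]
    rw [Finset.sum_comm (s := Finset.univ (α := Fin 3))]
    simp only [mul_assoc]
  weak_U i g hg := by
    have hpt x : ∑ j, stress c e (fun n x => ∑ k, a k * U k n x) (fun x => ∑ k, a k * φ k x)
        i j x * pd g j x = ∑ k, a k * ∑ j, stress c e (U k) (φ k) i j x * pd g j x := by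
      simp only [stress_sum_const_mul a (fun k => (hsol k).differentiable_U)
        fun k => (hsol k).differentiable_φ, Finset.sum_mul, Finset.mul_sum, mul_assoc]
      exact Finset.sum_comm
    rw [integral_congr_ae (ae_of_all _ hpt), integral_finsetSum _ fun k _ =>
      ((hsol k).integrable_stress_mul_pd hc he i hg).const_mul (a k)]
    simp [integral_const_mul, (hsol _).weak_U i g hg]
  weak_φ g hg := by
    have hpt x : ∑ i, displacement e ϵ (fun n x => ∑ k, a k * U k n x)
        (fun x => ∑ k, a k * φ k x) i x * pd g i x =
        ∑ k, a k * ∑ i, displacement e ϵ (U k) (φ k) i x * pd g i x := by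
      simp only [displacement_sum_const_mul a (fun k => (hsol k).differentiable_U)
        fun k => (hsol k).differentiable_φ, Finset.sum_mul, Finset.mul_sum, mul_assoc]
      exact Finset.sum_comm
    rw [integral_congr_ae (ae_of_all _ hpt), integral_finsetSum _ fun k _ =>
      ((hsol k).integrable_displacement_mul_pd he hϵ hg).const_mul (a k)]
    simp [integral_const_mul, (hsol _).weak_φ g hg]

theorem average_stress_sum_const_mul (hc : ∀ i j k l, BddMeas (c i j k l))
    (he : ∀ k i j, BddMeas (e k i j)) {κ : Type*} [Fintype κ] {A : κ → Fin 3 → Fin 3 → ℝ}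
    {v : κ → Fin 3 → ℝ} {U : κ → Fin 3 → ℝ³ → ℝ} {φ : κ → ℝ³ → ℝ}
    (hsol : ∀ k, IsCellSolution c e ϵ s (A k) (v k) (U k) (φ k)) (a : κ → ℝ) (i j : Fin 3) :
    ⨍ x in s, stress c e (fun n x => ∑ k, a k * U k n x) (fun x => ∑ k, a k * φ k x) i j x =
      ∑ k, a k * ⨍ x in s, stress c e (U k) (φ k) i j x := by
  simp only [stress_sum_const_mul a (fun k => (hsol k).differentiable_U)
    fun k => (hsol k).differentiable_φ]
  rw [average_finsetSum _ fun k _ =>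
    (((hsol k).memLp_stress hc he i j).integrable one_le_two).const_mul (a k)]
  simp only [average_const_mul]

theorem average_displacement_sum_const_mul (he : ∀ k i j, BddMeas (e k i j))
    (hϵ : ∀ i j, BddMeas (ϵ i j)) {κ : Type*} [Fintype κ] {A : κ → Fin 3 → Fin 3 → ℝ}
    {v : κ → Fin 3 → ℝ} {U : κ → Fin 3 → ℝ³ → ℝ} {φ : κ → ℝ³ → ℝ}
    (hsol : ∀ k, IsCellSolution c e ϵ s (A k) (v k) (U k) (φ k)) (a : κ → ℝ) (i : Fin 3) :
    ⨍ x in s, displacement e ϵ (fun n x => ∑ k, a k * U k n x) (fun x => ∑ k, a k * φ k x) i x =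
      ∑ k, a k * ⨍ x in s, displacement e ϵ (U k) (φ k) i x := by
  simp only [displacement_sum_const_mul a (fun k => (hsol k).differentiable_U)
    fun k => (hsol k).differentiable_φ]
  rw [average_finsetSum _ fun k _ =>
    (((hsol k).memLp_displacement he hϵ i).integrable one_le_two).const_mul (a k)]
  simp only [average_const_mul]

section Cube

variable {xα : ℝ³} {δ : ℝ}

theorem average_pd_U (hδ : 0 < δ) (hsol : IsCellSolution c e ϵ (cube xα δ) A v U φ)
    (n h : Fin 3) : ⨍ x in cube xα δ, pd (U n) h x = A n h := by
  have := neZero_volume_restrict_cube xα hδ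
  simp only [hsol.pd_U]
  rw [average_add (((hsol.h10_U n).memLp_pd h).integrable one_le_two) (integrable_const _),
    average_const, average_eq, integral_pd_eq_zero_of_H10_cube xα hδ.le (hsol.h10_U n),
    smul_zero, zero_add]

theorem average_pd_φ (hδ : 0 < δ) (hsol : IsCellSolution c e ϵ (cube xα δ) A v U φ)
    (i : Fin 3) : ⨍ x in cube xα δ, pd φ i x = v i := by
  have := neZero_volume_restrict_cube xα hδ
  simp only [hsol.pd_φ]
  rw [average_add ((hsol.h10_φ.memLp_pd i).integrable one_le_two) (integrable_const _),
    average_const, average_eq, integral_pd_eq_zero_of_H10_cube xα hδ.le hsol.h10_φ, smul_zero,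
    zero_add]

theorem average_energyDensity_ge (hδ : 0 < δ) (hc : ∀ i j k l, BddMeas (c i j k l))
    (he : ∀ k i j, BddMeas (e k i j)) (hϵ : ∀ i j, BddMeas (ϵ i j))
    (hcsym : ∀ i j k l x, c i j k l x = c j i k l x ∧ c i j k l x = c k l i j x)
    {α β : ℝ} (hα : 0 ≤ α) (hβ : 0 ≤ β)
    (hcell : ∀ x (X : Fin 3 → Fin 3 → ℝ), (∀ i j, X i j = X j i) →
      α * (∑ i, ∑ j, X i j ^ 2) ≤ ∑ i, ∑ j, ∑ k, ∑ l, c i j k l x * X i j * X k l)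
    (hϵell : ∀ x (v : Fin 3 → ℝ), β * (∑ i, v i ^ 2) ≤ ∑ i, ∑ j, ϵ i j x * v i * v j)
    (hsol : IsCellSolution c e ϵ (cube xα δ) A v U φ) :
    α * ∑ i, ∑ j, ((A i j + A j i) / 2) ^ 2 + β * ∑ i, v i ^ 2 ≤
      ⨍ x in cube xα δ, energyDensity c e ϵ U φ x := by
  have := neZero_volume_restrict_cube xα hδ
  set G : Fin 3 → Fin 3 → ℝ³ → ℝ := fun i j x => (pd (U i) j x + pd (U j) i x) / 2
  have hG i j : MemLp (G i j) 2 (volume.restrict (cube xα δ)) :=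
    ((hsol.memLp_pd_U i j).add (hsol.memLp_pd_U j i)).mul_const 2⁻¹
  have hmeanG i j : ⨍ x in cube xα δ, G i j x = (A i j + A j i) / 2 := by
    rw [average_div_const, average_add ((hsol.memLp_pd_U i j).integrable one_le_two)
      ((hsol.memLp_pd_U j i).integrable one_le_two), hsol.average_pd_U hδ, hsol.average_pd_U hδ]
  have hGsq : Integrable (fun x => ∑ i, ∑ j, G i j x ^ 2) (volume.restrict (cube xα δ)) :=
    integrable_finsetSum _ fun i _ => integrable_finsetSum _ fun j _ => (hG i j).integrable_sq
  have hFsq : Integrable (fun x => ∑ i, pd φ i x ^ 2) (volume.restrict (cube xα δ)) :=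
    integrable_finsetSum _ fun i _ => (hsol.memLp_pd_φ i).integrable_sq
  calc α * ∑ i, ∑ j, ((A i j + A j i) / 2) ^ 2 + β * ∑ i, v i ^ 2
      = α * ∑ i, ∑ j, (⨍ x in cube xα δ, G i j x) ^ 2 +
          β * ∑ i, (⨍ x in cube xα δ, pd φ i x) ^ 2 := by
        simp only [hmeanG, hsol.average_pd_φ hδ]
    _ ≤ α * ∑ i, ∑ j, (⨍ x in cube xα δ, G i j x ^ 2) +
          β * ∑ i, ⨍ x in cube xα δ, pd φ i x ^ 2 :=
        add_le_add (mul_le_mul_of_nonneg_left (Finset.sum_le_sum fun i _ =>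
          Finset.sum_le_sum fun j _ => sq_average_le_average_sq (hG i j)) hα)
          (mul_le_mul_of_nonneg_left (Finset.sum_le_sum fun i _ =>
            sq_average_le_average_sq (hsol.memLp_pd_φ i)) hβ)
    _ = ⨍ x in cube xα δ, (α * ∑ i, ∑ j, G i j x ^ 2 + β * ∑ i, pd φ i x ^ 2) := by
        rw [average_add (hGsq.const_mul α) (hFsq.const_mul β), average_const_mul,
          average_const_mul, average_finsetSum _ fun i _ => integrable_finsetSum _ fun j _ =>
            (hG i j).integrable_sq,
          average_finsetSum _ fun i _ => (hsol.memLp_pd_φ i).integrable_sq]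
        simp only [average_finsetSum _ fun j _ => (hG _ j).integrable_sq]
    _ ≤ ⨍ x in cube xα δ, energyDensity c e ϵ U φ x :=
        average_mono ((hGsq.const_mul α).add (hFsq.const_mul β))
          (hsol.integrable_energyDensity hc he hϵ)
          (ae_of_all _ fun x => energyDensity_ge (hcsym · · · · x) (hcell x) (hϵell x) U φ)

theorem effective_energy_ge (hδ : 0 < δ) (hc : ∀ i j k l, BddMeas (c i j k l))
    (he : ∀ k i j, BddMeas (e k i j)) (hϵ : ∀ i j, BddMeas (ϵ i j))
    (hcsym : ∀ i j k l x, c i j k l x = c j i k l x ∧ c i j k l x = c k l i j x)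
    {α β : ℝ} (hα : 0 ≤ α) (hβ : 0 ≤ β)
    (hcell : ∀ x (X : Fin 3 → Fin 3 → ℝ), (∀ i j, X i j = X j i) →
      α * (∑ i, ∑ j, X i j ^ 2) ≤ ∑ i, ∑ j, ∑ k, ∑ l, c i j k l x * X i j * X k l)
    (hϵell : ∀ x (v : Fin 3 → ℝ), β * (∑ i, v i ^ 2) ≤ ∑ i, ∑ j, ϵ i j x * v i * v j)
    {κ : Type*} [Fintype κ] {A : κ → Fin 3 → Fin 3 → ℝ} {v : κ → Fin 3 → ℝ}
    {U : κ → Fin 3 → ℝ³ → ℝ} {φ : κ → ℝ³ → ℝ}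
    (hsol : ∀ k, IsCellSolution c e ϵ (cube xα δ) (A k) (v k) (U k) (φ k)) (a : κ → ℝ) :
    α * ∑ i, ∑ j, ((∑ k, a k * A k i j + ∑ k, a k * A k j i) / 2) ^ 2 +
        β * ∑ i, (∑ k, a k * v k i) ^ 2 ≤
      ∑ i, ∑ j, (∑ k, a k * ⨍ x in cube xα δ, stress c e (U k) (φ k) i j x) *
          ∑ k, a k * A k i j -
        ∑ i, (∑ k, a k * ⨍ x in cube xα δ, displacement e ϵ (U k) (φ k) i x) *
          ∑ k, a k * v k i := by
  have hsum := sum_const_mul hc he hϵ hsol a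
  have := (hsum.average_energyDensity_ge hδ hc he hϵ hcsym hα hβ hcell hϵell).trans_eq
    (hsum.average_energyDensity_eq hc he hϵ)
  simpa only [average_stress_sum_const_mul hc he hsol,
    average_displacement_sum_const_mul he hϵ hsol] using this

end Cube

end IsCellSolution

end CellProblem

section Effective

variable {c : Fin 3 → Fin 3 → Fin 3 → Fin 3 → ℝ³ → ℝ} {e : Fin 3 → Fin 3 → Fin 3 → ℝ³ → ℝ}
  {ϵ : Fin 3 → Fin 3 → ℝ³ → ℝ} {xα : ℝ³} {δ : ℝ} {α β : ℝ}

theorem cH_quadratic_form_ge (hδ : 0 < δ) (hc : ∀ i j k l, BddMeas (c i j k l))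
    (he : ∀ k i j, BddMeas (e k i j)) (hϵ : ∀ i j, BddMeas (ϵ i j))
    (hcsym : ∀ i j k l x, c i j k l x = c j i k l x ∧ c i j k l x = c k l i j x)
    (hα : 0 ≤ α) (hβ : 0 ≤ β)
    (hcell : ∀ x (X : Fin 3 → Fin 3 → ℝ), (∀ i j, X i j = X j i) →
      α * (∑ i, ∑ j, X i j ^ 2) ≤ ∑ i, ∑ j, ∑ k, ∑ l, c i j k l x * X i j * X k l)
    (hϵell : ∀ x (v : Fin 3 → ℝ), β * (∑ i, v i ^ 2) ≤ ∑ i, ∑ j, ϵ i j x * v i * v j)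
    {P : Fin 3 → Fin 3 → Fin 3 → ℝ³ → ℝ} {Φ : Fin 3 → Fin 3 → ℝ³ → ℝ}
    (hP : ∀ p : Fin 3 × Fin 3, IsCellSolution c e ϵ (cube xα δ)
      (fun n h => if n = p.1 ∧ h = p.2 then 1 else 0) 0 (P p.1 p.2) (Φ p.1 p.2))
    (X : Fin 3 → Fin 3 → ℝ) (hX : ∀ i j, X i j = X j i) :
    α * (∑ i, ∑ j, X i j ^ 2) ≤
      ∑ i, ∑ j, ∑ k, ∑ l, cH c e (cube xα δ) P Φ i j k l * X i j * X k l := by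
  have key := IsCellSolution.effective_energy_ge hδ hc he hϵ hcsym hα hβ hcell hϵell hP
    fun p => X p.1 p.2
  have hcomb i j :
      ∑ p : Fin 3 × Fin 3, X p.1 p.2 * (if i = p.1 ∧ j = p.2 then 1 else 0) = X i j := by
    simp [Fintype.sum_prod_type, ite_and]
  have hsymm i j : (X i j + X j i) / 2 = X i j := by
    rw [hX j i]
    ring
  simp only [hcomb, hsymm, Pi.zero_apply, mul_zero, Finset.sum_const_zero, sub_zero,
    zero_pow two_ne_zero, add_zero] at key
  refine key.trans_eq ?_
  simp only [Fintype.sum_prod_type, Finset.sum_mul]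
  refine Finset.sum_congr rfl fun i _ => Finset.sum_congr rfl fun j _ =>
    Finset.sum_congr rfl fun k _ => Finset.sum_congr rfl fun l _ => ?_
  rw [cH_eq_average_stress]
  ring

theorem epsH_quadratic_form_ge (hδ : 0 < δ) (hc : ∀ i j k l, BddMeas (c i j k l))
    (he : ∀ k i j, BddMeas (e k i j)) (hϵ : ∀ i j, BddMeas (ϵ i j))
    (hcsym : ∀ i j k l x, c i j k l x = c j i k l x ∧ c i j k l x = c k l i j x)
    (hα : 0 ≤ α) (hβ : 0 ≤ β)
    (hcell : ∀ x (X : Fin 3 → Fin 3 → ℝ), (∀ i j, X i j = X j i) →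
      α * (∑ i, ∑ j, X i j ^ 2) ≤ ∑ i, ∑ j, ∑ k, ∑ l, c i j k l x * X i j * X k l)
    (hϵell : ∀ x (v : Fin 3 → ℝ), β * (∑ i, v i ^ 2) ≤ ∑ i, ∑ j, ϵ i j x * v i * v j)
    {Q : Fin 3 → Fin 3 → ℝ³ → ℝ} {Ψ : Fin 3 → ℝ³ → ℝ}
    (hQ : ∀ l, IsCellSolution c e ϵ (cube xα δ) 0 (fun h => if h = l then 1 else 0) (Q l) (Ψ l))
    (v : Fin 3 → ℝ) :
    β * (∑ i, v i ^ 2) ≤ ∑ i, ∑ l, epsH e ϵ (cube xα δ) Q Ψ i l * v i * v l := by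
  have key := IsCellSolution.effective_energy_ge hδ hc he hϵ hcsym hα hβ hcell hϵell hQ v
  simp only [Pi.zero_apply, mul_zero, Finset.sum_const_zero, mul_ite, mul_one, Finset.sum_ite_eq,
    Finset.mem_univ, if_true, add_zero, zero_div, zero_pow two_ne_zero, zero_add] at key
  refine key.trans_eq ?_
  simp only [zero_sub, Finset.sum_mul, ← Finset.sum_neg_distrib]
  refine Finset.sum_congr rfl fun i _ => Finset.sum_congr rfl fun l _ => ?_
  rw [epsH_eq_neg_average_displacement]
  ring

end Effective

theorem hmm_effective_coefficients_elliptic_general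
    (c : Fin 3 → Fin 3 → Fin 3 → Fin 3 → (Fin 3 → ℝ) → ℝ)
    (e : Fin 3 → Fin 3 → Fin 3 → (Fin 3 → ℝ) → ℝ)
    (ϵ : Fin 3 → Fin 3 → (Fin 3 → ℝ) → ℝ)
    (hc : ∀ i j k l, BddMeas (c i j k l)) (he : ∀ k i j, BddMeas (e k i j))
    (hϵ : ∀ i j, BddMeas (ϵ i j))
    (hcsym : ∀ i j k l x, c i j k l x = c j i k l x ∧ c i j k l x = c k l i j x)
    (hcell : ∃ α > (0:ℝ), ∀ x (X : Fin 3 → Fin 3 → ℝ), (∀ i j, X i j = X j i) →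
      α * (∑ i, ∑ j, X i j ^ 2) ≤ ∑ i, ∑ j, ∑ k, ∑ l, c i j k l x * X i j * X k l)
    (hϵell : ∃ β > (0:ℝ), ∀ x (v : Fin 3 → ℝ),
      β * (∑ i, v i ^ 2) ≤ ∑ i, ∑ j, ϵ i j x * v i * v j)
    (xα : Fin 3 → ℝ) (δ : ℝ) (hδ : 0 < δ)
    -- the first family of cell problems `(P^{kl}, Φ_{kl})`
    (P : Fin 3 → Fin 3 → Fin 3 → (Fin 3 → ℝ) → ℝ) (Φ : Fin 3 → Fin 3 → (Fin 3 → ℝ) → ℝ)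
    (hPbc : ∀ k l n, H10 (cube xα δ) (fun x => P k l n x - if n = k then x l else 0))
    (hΦbc : ∀ k l, H10 (cube xα δ) (Φ k l))
    (hP1 : ∀ k l i', ∀ g, H10 (cube xα δ) g →
      ∫ x in cube xα δ, (∑ j, ((∑ n, ∑ h, c i' j n h x * pd (P k l n) h x)
        + ∑ h, e h i' j x * pd (Φ k l) h x) * pd g j x) = 0)
    (hP2 : ∀ k l, ∀ g, H10 (cube xα δ) g →
      ∫ x in cube xα δ, (∑ i', ((∑ n, ∑ h, e i' n h x * pd (P k l n) h x)
        - ∑ h, ϵ i' h x * pd (Φ k l) h x) * pd g i' x) = 0)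
    -- the second family of cell problems `(Q^{l}, Ψ_l)`
    (Q : Fin 3 → Fin 3 → (Fin 3 → ℝ) → ℝ) (Ψ : Fin 3 → (Fin 3 → ℝ) → ℝ)
    (hQbc : ∀ l n, H10 (cube xα δ) (Q l n))
    (hΨbc : ∀ l, H10 (cube xα δ) (fun x => Ψ l x - x l))
    (hQ1 : ∀ l i', ∀ g, H10 (cube xα δ) g →
      ∫ x in cube xα δ, (∑ j, ((∑ n, ∑ h, c i' j n h x * pd (Q l n) h x)
        + ∑ h, e h i' j x * pd (Ψ l) h x) * pd g j x) = 0)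
    (hQ2 : ∀ l, ∀ g, H10 (cube xα δ) g →
      ∫ x in cube xα δ, (∑ i', ((∑ n, ∑ h, e i' n h x * pd (Q l n) h x)
        - ∑ h, ϵ i' h x * pd (Ψ l) h x) * pd g i' x) = 0) :
    (∃ αH > (0:ℝ), ∀ X : Fin 3 → Fin 3 → ℝ, (∀ i j, X i j = X j i) →
        αH * (∑ i, ∑ j, X i j ^ 2) ≤
          ∑ i, ∑ j, ∑ k, ∑ l, cH c e (cube xα δ) P Φ i j k l * X i j * X k l) ∧
    (∃ βH > (0:ℝ), ∀ v : Fin 3 → ℝ,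
        βH * (∑ i, v i ^ 2) ≤ ∑ i, ∑ l, epsH e ϵ (cube xα δ) Q Ψ i l * v i * v l) := by
  obtain ⟨α, hα, hcell⟩ := hcell
  obtain ⟨β, hβ, hϵell⟩ := hϵell
  have hP : ∀ p : Fin 3 × Fin 3, IsCellSolution c e ϵ (cube xα δ)
      (fun n h => if n = p.1 ∧ h = p.2 then 1 else 0) 0 (P p.1 p.2) (Φ p.1 p.2) := fun p =>
    ⟨fun n => by simpa [ite_and] using hPbc p.1 p.2 n, by simpa using hΦbc p.1 p.2, hP1 p.1 p.2,
      hP2 p.1 p.2⟩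
  have hQ : ∀ l, IsCellSolution c e ϵ (cube xα δ) 0 (fun h => if h = l then 1 else 0)
      (Q l) (Ψ l) := fun l =>
    ⟨fun n => by simpa using hQbc l n, by simpa using hΨbc l, hQ1 l, hQ2 l⟩
  exact ⟨⟨α, hα, cH_quadratic_form_ge hδ hc he hϵ hcsym hα.le hβ.le hcell hϵell hP⟩,
    ⟨β, hβ, epsH_quadratic_form_ge hδ hc he hϵ hcsym hα.le hβ.le hcell hϵell hQ⟩⟩

/-- the HMM effective elastic tensor is uniformly elliptic on
symmetric matrices and the HMM effective dielectric tensor is positive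
definite. -/
theorem hmm_effective_coefficients_elliptic
    (c : Fin 3 → Fin 3 → Fin 3 → Fin 3 → (Fin 3 → ℝ) → ℝ)
    (e : Fin 3 → Fin 3 → Fin 3 → (Fin 3 → ℝ) → ℝ)
    (ϵ : Fin 3 → Fin 3 → (Fin 3 → ℝ) → ℝ)
    (hc : ∀ i j k l, BddMeas (c i j k l)) (he : ∀ k i j, BddMeas (e k i j))
    (hϵ : ∀ i j, BddMeas (ϵ i j))
    (hcsym : ∀ i j k l x, c i j k l x = c j i k l x ∧ c i j k l x = c k l i j x)
    (hesym : ∀ k i j x, e k i j x = e k j i x)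
    (hϵsym : ∀ i j x, ϵ i j x = ϵ j i x)
    (hcell : ∃ α > (0:ℝ), ∀ x (X : Fin 3 → Fin 3 → ℝ), (∀ i j, X i j = X j i) →
      α * (∑ i, ∑ j, X i j ^ 2) ≤ ∑ i, ∑ j, ∑ k, ∑ l, c i j k l x * X i j * X k l)
    (hϵell : ∃ β > (0:ℝ), ∀ x (v : Fin 3 → ℝ),
      β * (∑ i, v i ^ 2) ≤ ∑ i, ∑ j, ϵ i j x * v i * v j)
    (xα : Fin 3 → ℝ) (δ : ℝ) (hδ : 0 < δ)
    -- the first family of cell problems `(P^{kl}, Φ_{kl})`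
    (P : Fin 3 → Fin 3 → Fin 3 → (Fin 3 → ℝ) → ℝ) (Φ : Fin 3 → Fin 3 → (Fin 3 → ℝ) → ℝ)
    (hPreg : ∀ k l n, Differentiable ℝ (P k l n))
    (hPbc : ∀ k l n, H10 (cube xα δ) (fun x => P k l n x - if n = k then x l else 0))
    (hΦbc : ∀ k l, H10 (cube xα δ) (Φ k l))
    (hP1 : ∀ k l i', ∀ g, H10 (cube xα δ) g →
      ∫ x in cube xα δ, (∑ j, ((∑ n, ∑ h, c i' j n h x * pd (P k l n) h x)
        + ∑ h, e h i' j x * pd (Φ k l) h x) * pd g j x) = 0)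
    (hP2 : ∀ k l, ∀ g, H10 (cube xα δ) g →
      ∫ x in cube xα δ, (∑ i', ((∑ n, ∑ h, e i' n h x * pd (P k l n) h x)
        - ∑ h, ϵ i' h x * pd (Φ k l) h x) * pd g i' x) = 0)
    -- the second family of cell problems `(Q^{l}, Ψ_l)`
    (Q : Fin 3 → Fin 3 → (Fin 3 → ℝ) → ℝ) (Ψ : Fin 3 → (Fin 3 → ℝ) → ℝ)
    (hΨreg : ∀ l, Differentiable ℝ (Ψ l))
    (hQbc : ∀ l n, H10 (cube xα δ) (Q l n))
    (hΨbc : ∀ l, H10 (cube xα δ) (fun x => Ψ l x - x l))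
    (hQ1 : ∀ l i', ∀ g, H10 (cube xα δ) g →
      ∫ x in cube xα δ, (∑ j, ((∑ n, ∑ h, c i' j n h x * pd (Q l n) h x)
        + ∑ h, e h i' j x * pd (Ψ l) h x) * pd g j x) = 0)
    (hQ2 : ∀ l, ∀ g, H10 (cube xα δ) g →
      ∫ x in cube xα δ, (∑ i', ((∑ n, ∑ h, e i' n h x * pd (Q l n) h x)
        - ∑ h, ϵ i' h x * pd (Ψ l) h x) * pd g i' x) = 0) :
    (∃ αH > (0:ℝ), ∀ X : Fin 3 → Fin 3 → ℝ, (∀ i j, X i j = X j i) →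
        αH * (∑ i, ∑ j, X i j ^ 2) ≤
          ∑ i, ∑ j, ∑ k, ∑ l, cH c e (cube xα δ) P Φ i j k l * X i j * X k l) ∧
    (∃ βH > (0:ℝ), ∀ v : Fin 3 → ℝ,
        βH * (∑ i, v i ^ 2) ≤ ∑ i, ∑ l, epsH e ϵ (cube xα δ) Q Ψ i l * v i * v l) :=
  hmm_effective_coefficients_elliptic_general c e ϵ hc he hϵ hcsym hcell hϵell xα δ hδ P Φ hPbc hΦbc
    hP1 hP2 Q Ψ hQbc hΨbc hQ1 hQ2
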